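/- Suppose S ⊆ V is an independent set in G, the neighborhoods N(s), s ∈ S, are pairwise disjoint, and |N(s)| ≤ Δ for every s ∈ S. Then ∑_{S' ⊆ S} |B(S')| ≤ 2^{|V∖S|} · (2 − 2^{−Δ})^{|S|} (as real numbers). -/

import Mathlib

/-- `Bset G S S'` is `B(S')`: the collection of all subsets `V' ⊆ V∖S` with
`V' ∩ N(s) ≠ ∅` for every `s ∈ S'`. -/
def Bset {V : Type*} [Fintype V] [DecidableEq V] (G : SimpleGraph V) [DecidableRel G.Adj]
    (S S' : Finset V) : Finset (Finset V) :=
  (Finset.univ \ S).powerset.filter fun V' => ∀ s ∈ S', V' ∩ G.neighborFinset s ≠ ∅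

/-!
A set in `B(S')` either meets `N(a)`, so lies in `B(S' ∪ {a})`, or is a set of `B(S')` over the
smaller ground set `(V ∖ S) ∖ N(a)`. Since the neighbourhoods are disjoint, induction on `S'`
gives the exact count `|B(S')| = 2^{|V∖S|} ∏_{s ∈ S'} (1 - 2^{-|N(s)|})`. Summing over `S' ⊆ S`
turns the sum of products into `∏_{s ∈ S} (2 - 2^{-|N(s)|})`, each factor at most `2 - 2^{-Δ}`.
-/

open Finset

section HittingSets

variable {α ι : Type*} [DecidableEq α]

def hittingSets (T : Finset α) (I : Finset ι) (N : ι → Finset α) : Finset (Finset α) :=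
  T.powerset.filter fun A => ∀ i ∈ I, ¬ Disjoint A (N i)

theorem hittingSets_empty (T : Finset α) (N : ι → Finset α) :
    hittingSets T ∅ N = T.powerset := by
  simp [hittingSets]

theorem filter_not_disjoint_hittingSets [DecidableEq ι] (T : Finset α) (I : Finset ι)
    (N : ι → Finset α) (a : ι) :
    (hittingSets T I N).filter (fun A => ¬ Disjoint A (N a)) = hittingSets T (insert a I) N := by
  ext A
  simp only [hittingSets, mem_filter, forall_mem_insert]
  tauto

theorem filter_disjoint_hittingSets (T : Finset α) (I : Finset ι) (N : ι → Finset α) (a : ι) :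
    (hittingSets T I N).filter (fun A => Disjoint A (N a)) = hittingSets (T \ N a) I N := by
  ext A
  simp only [hittingSets, mem_filter, mem_powerset, subset_sdiff]
  tauto

theorem card_hittingSets_insert_add [DecidableEq ι] (T : Finset α) (I : Finset ι)
    (N : ι → Finset α) (a : ι) :
    #(hittingSets T (insert a I) N) + #(hittingSets (T \ N a) I N) = #(hittingSets T I N) := by
  rw [← filter_not_disjoint_hittingSets, ← filter_disjoint_hittingSets,
    add_comm, card_filter_add_card_filter_not]

theorem card_hittingSets [DecidableEq ι] (T : Finset α) (I : Finset ι) (N : ι → Finset α)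
    (hN : ∀ i ∈ I, N i ⊆ T) (hdisj : (I : Set ι).PairwiseDisjoint N) :
    (#(hittingSets T I N) : ℝ) = 2 ^ #T * ∏ i ∈ I, (1 - 2 ^ (-(#(N i) : ℤ))) := by
  induction I using Finset.induction_on generalizing T with
  | empty => simp [hittingSets_empty]
  | @insert a I ha ih =>
    have hdisjI : (I : Set ι).PairwiseDisjoint N :=
      hdisj.subset (by simp [Set.subset_insert])
    have hNa : N a ⊆ T := hN a (mem_insert_self a I)
    have hN' : ∀ i ∈ I, N i ⊆ T \ N a := fun i hi =>
      subset_sdiff.mpr ⟨hN i (mem_insert_of_mem hi),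
        hdisj (by simp [hi]) (by simp) (by rintro rfl; exact ha hi)⟩
    have hcard : (2 : ℝ) ^ #(T \ N a) = 2 ^ #T * 2 ^ (-(#(N a) : ℤ)) := by
      rw [zpow_neg, zpow_natCast, ← card_sdiff_add_card_eq_card hNa, pow_add,
        mul_inv_cancel_right₀ (by positivity)]
    have hsplit : (#(hittingSets T (insert a I) N) : ℝ) + #(hittingSets (T \ N a) I N)
        = #(hittingSets T I N) := mod_cast card_hittingSets_insert_add T I N a
    rw [ih T (fun i hi => hN i (mem_insert_of_mem hi)) hdisjI, ih (T \ N a) hN' hdisjI] at hsplit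
    rw [prod_insert ha]
    linear_combination hsplit - (∏ i ∈ I, (1 - (2 : ℝ) ^ (-(#(N i) : ℤ)))) * hcard

end HittingSets

section Graph

variable {V : Type*} [Fintype V] [DecidableEq V] (G : SimpleGraph V) [DecidableRel G.Adj]

theorem Bset_eq_hittingSets (S S' : Finset V) :
    Bset G S S' = hittingSets (univ \ S) S' fun s => G.neighborFinset s := by
  simp only [Bset, hittingSets, disjoint_iff_inter_eq_empty]

theorem neighborFinset_subset_compl_of_isIndepSet {S : Finset V}
    (hS : ∀ u ∈ S, ∀ v ∈ S, ¬ G.Adj u v) {s : V} (hs : s ∈ S) :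
    G.neighborFinset s ⊆ univ \ S := fun v hv =>
  mem_sdiff.mpr ⟨mem_univ v, fun hvS => hS s hs v hvS ((G.mem_neighborFinset s v).mp hv)⟩

end Graph

/-- If `S` is independent, the neighborhoods `N(s)`, `s ∈ S`, are pairwise
disjoint and of size at most `Δ`, then
`∑_{S' ⊆ S} |B(S')| ≤ 2^{|V∖S|} · (2 − 2^{−Δ})^{|S|}` (as real numbers). -/
theorem sum_card_Bset_le
    {V : Type*} [Fintype V] [DecidableEq V] (G : SimpleGraph V) [DecidableRel G.Adj]
    (Δ : ℕ) (S : Finset V) (hS : ∀ u ∈ S, ∀ v ∈ S, ¬ G.Adj u v)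
    (hdisj : ∀ s₁ ∈ S, ∀ s₂ ∈ S, s₁ ≠ s₂ →
      G.neighborFinset s₁ ∩ G.neighborFinset s₂ = ∅)
    (hdeg : ∀ s ∈ S, (G.neighborFinset s).card ≤ Δ) :
    ∑ S' ∈ S.powerset, ((Bset G S S').card : ℝ)
      ≤ 2 ^ (Finset.univ \ S).card * (2 - 2 ^ (-(Δ : ℤ)) : ℝ) ^ S.card := by
  have hpair : (S : Set V).PairwiseDisjoint fun s => G.neighborFinset s :=
    fun s₁ h₁ s₂ h₂ hne => disjoint_iff_inter_eq_empty.mpr (hdisj s₁ h₁ s₂ h₂ hne)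
  calc ∑ S' ∈ S.powerset, ((Bset G S S').card : ℝ)
      = ∑ S' ∈ S.powerset, 2 ^ #(univ \ S) *
          ∏ s ∈ S', (1 - 2 ^ (-(#(G.neighborFinset s) : ℤ))) := by
        refine sum_congr rfl fun S' hS' => ?_
        have hS' := mem_powerset.mp hS'
        rw [Bset_eq_hittingSets, card_hittingSets _ _ _
          (fun s hs => neighborFinset_subset_compl_of_isIndepSet G hS (hS' hs))
          (hpair.subset hS')]
    _ = 2 ^ #(univ \ S) * ∏ s ∈ S, (2 - 2 ^ (-(#(G.neighborFinset s) : ℤ))) := by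
        rw [← mul_sum, ← prod_one_add]
        exact congrArg _ (prod_congr rfl fun s _ => by ring)
    _ ≤ 2 ^ #(univ \ S) * ∏ _s ∈ S, (2 - 2 ^ (-(Δ : ℤ))) := by
        have hle_one (n : ℕ) : (2 : ℝ) ^ (-(n : ℤ)) ≤ 1 :=
          zpow_le_one_of_nonpos₀ one_le_two (by simp)
        gcongr with s hs
        · exact fun s _ => by linarith [hle_one (G.neighborFinset s).card]
        · exact one_le_two
        · exact hdeg s hs
    _ = 2 ^ #(univ \ S) * (2 - 2 ^ (-(Δ : ℤ))) ^ #S := by rw [prod_const]
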